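/- The (r+p) × (r+p) tridiagonal matrix Q with Q(1,1) = 2, Q(i, i+1) = Q(i+1, i) = 2 for all i, and all other entries 0, has eigenvalues λ_i = 4cos((2i−1)π/(n+2p)) for i = 1, …, r+p, where n = 2r+1, with eigenvector for λ_i having j-th entry cos((2i−1)(2j−1)π/(2(n+2p))); in particular the largest eigenvalue 4cos(π/(n+2p)) has a strictly positive eigenvector. -/

import Mathlib

open Real

/-- The `m × m` tridiagonal matrix with `2` in position `(1,1)` (index `0` here),
`2` on the sub- and super-diagonals, and `0` elsewhere. -/
def triQ (m : ℕ) : Matrix (Fin m) (Fin m) ℝ := fun i j =>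
  if (i : ℕ) = 0 ∧ (j : ℕ) = 0 then 2
  else if (i : ℕ) + 1 = (j : ℕ) ∨ (j : ℕ) + 1 = (i : ℕ) then 2 else 0

/-- The candidate eigenvector for the `i`-th eigenvalue: its `j`-th entry
(`j = 1, …, m`, here indexed by `Fin m`) is `cos((2i−1)(2j−1)π/(2N))`. -/
noncomputable def triV (m N i : ℕ) : Fin m → ℝ := fun j =>
  Real.cos ((2 * (i : ℝ) - 1) * (2 * (j : ℝ) + 1) * π / (2 * N))

private lemma triQ_two {m : ℕ} (j k : Fin m)
    (h : ((j:ℕ) = 0 ∧ (k:ℕ) = 0) ∨ (j:ℕ)+1 = (k:ℕ) ∨ (k:ℕ)+1 = (j:ℕ)) : triQ m j k = 2 := by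
  unfold triQ; split_ifs with h1 h2 <;> first | rfl | omega

private lemma triQ_zero {m : ℕ} (j k : Fin m)
    (h : ¬(((j:ℕ) = 0 ∧ (k:ℕ) = 0) ∨ (j:ℕ)+1 = (k:ℕ) ∨ (k:ℕ)+1 = (j:ℕ))) : triQ m j k = 0 := by
  unfold triQ; split_ifs with h1 h2 <;> first | rfl | omega

private lemma sum_one {m : ℕ} (f : Fin m → ℝ) (a : Fin m)
    (h0 : ∀ k, k ≠ a → f k = 0) : ∑ k, f k = f a :=
  Finset.sum_eq_single_of_mem a (Finset.mem_univ a) (fun k _ => h0 k)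

private lemma sum_two {m : ℕ} (f : Fin m → ℝ) (a b : Fin m) (hab : a ≠ b)
    (h0 : ∀ k, k ≠ a → k ≠ b → f k = 0) : ∑ k, f k = f a + f b := by
  rw [← Finset.add_sum_erase _ f (Finset.mem_univ a)]
  congr 1
  rw [Finset.sum_eq_single_of_mem b (Finset.mem_erase.2 ⟨(Ne.symm hab), Finset.mem_univ b⟩)]
  intro k hk hkb
  exact h0 k (Finset.mem_erase.1 hk).1 hkb

private lemma key (m N : ℕ) (hm : 1 ≤ m) (hN : N = 2*m+1) (i : ℕ) (hi1 : 1 ≤ i) :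
    (triQ m).mulVec (triV m N i) =
      (4 * Real.cos ((2*(i:ℝ)-1) * π / N)) • triV m N i := by
  have hN0 : (N:ℝ) ≠ 0 := Nat.cast_ne_zero.2 (by omega)
  set c : ℝ → ℝ := fun x => Real.cos ((2*(i:ℝ)-1) * x * π / (2*N)) with hc
  have hv : ∀ k : Fin m, triV m N i k = c (2*(k:ℝ)+1) := fun k => rfl
  have hrec : ∀ x : ℝ, (4 * Real.cos ((2*(i:ℝ)-1) * π / N)) * c x
      = 2 * c (x-2) + 2 * c (x+2) := by
    intro x
    have h1 : (2*(i:ℝ)-1) * (x-2) * π / (2*N)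
        = (2*(i:ℝ)-1)*x*π/(2*N) - (2*(i:ℝ)-1) * π / N := by field_simp
    have h2 : (2*(i:ℝ)-1) * (x+2) * π / (2*N)
        = (2*(i:ℝ)-1)*x*π/(2*N) + (2*(i:ℝ)-1) * π / N := by field_simp
    simp only [hc, h1, h2, Real.cos_sub, Real.cos_add]; ring
  have hcN : c N = 0 := by
    simp only [hc]
    rw [Real.cos_eq_zero_iff]
    refine ⟨(i:ℤ) - 1, ?_⟩
    push_cast
    field_simp
    ring
  have hceven : c (-1) = c 1 := by
    simp only [hc]
    rw [show (2*(i:ℝ)-1) * (-1) * π / (2*N) = -((2*(i:ℝ)-1) * 1 * π / (2*N)) by ring,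
      Real.cos_neg]
  have hNR : (N:ℝ) = 2*m+1 := by rw [hN]; push_cast; ring
  funext j
  have hmv : (triQ m).mulVec (triV m N i) j = ∑ k, triQ m j k * triV m N i k := rfl
  have hsmul : ((4 * Real.cos ((2*(i:ℝ)-1) * π / N)) • triV m N i) j
      = 2 * c (2*(j:ℝ)+1-2) + 2 * c (2*(j:ℝ)+1+2) := by
    simp only [Pi.smul_apply, smul_eq_mul, hv j, hrec]
  rw [hmv, hsmul]
  rcases Nat.eq_zero_or_pos (j:ℕ) with hj0 | hjpos
  · have hjR : ((j:ℕ):ℝ) = 0 := by exact_mod_cast hj0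
    by_cases hlt : (j:ℕ)+1 < m
    · -- j = 0, m ≥ 2 : two terms, indices 0 and 1
      have hb : (1:ℕ) < m := by omega
      have hside : ∀ k, k ≠ j → k ≠ ⟨1, hb⟩ → triQ m j k * triV m N i k = 0 := by
        intro k hk1 hk2
        rw [Ne, Fin.ext_iff] at hk1 hk2
        simp only [Fin.val_mk] at hk1 hk2
        rw [triQ_zero j k (by omega), zero_mul]
      rw [sum_two _ j ⟨1, hb⟩ (by simp [Fin.ext_iff]; omega) hside,
        triQ_two j j (by omega), triQ_two j ⟨1, hb⟩ (by simp; omega), hv, hv]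
      simp only [Fin.val_mk, hjR]
      norm_num [hceven]
    · -- j = 0, m = 1 : one term
      have hm1 : m = 1 := by omega
      have hc3 : c 3 = 0 := by
        rw [show (3:ℝ) = (N:ℝ) by rw [hNR, hm1]; norm_num]
        exact hcN
      have hside : ∀ k, k ≠ j → triQ m j k * triV m N i k = 0 := by
        intro k hk
        rw [Ne, Fin.ext_iff] at hk
        rw [triQ_zero j k (by omega), zero_mul]
      rw [sum_one _ j hside, triQ_two j j (by omega), hv]
      simp only [hjR]
      norm_num [hceven, hc3]
  · obtain ⟨t, ht⟩ : ∃ t, (j:ℕ) = t + 1 := ⟨(j:ℕ) - 1, by omega⟩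
    have hjR : ((j:ℕ):ℝ) = (t:ℝ) + 1 := by exact_mod_cast congrArg (Nat.cast (R := ℝ)) ht
    have hta : t < m := by omega
    by_cases hlt : (j:ℕ)+1 < m
    · -- interior : two terms, indices t and j+1
      have hside : ∀ k, k ≠ ⟨t, hta⟩ → k ≠ ⟨(j:ℕ)+1, hlt⟩ → triQ m j k * triV m N i k = 0 := by
        intro k hk1 hk2
        rw [Ne, Fin.ext_iff] at hk1 hk2
        simp only [Fin.val_mk] at hk1 hk2
        rw [triQ_zero j k (by omega), zero_mul]
      rw [sum_two _ ⟨t, hta⟩ ⟨(j:ℕ)+1, hlt⟩ (by simp [Fin.ext_iff]; omega) hside,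
        triQ_two j ⟨t, hta⟩ (by simp; omega), triQ_two j ⟨(j:ℕ)+1, hlt⟩ (by simp), hv, hv]
      simp only [Fin.val_mk]
      rw [show (2*((t:ℕ):ℝ)+1) = 2*((j:ℕ):ℝ)+1-2 by rw [hjR]; ring,
        show (2*((((j:ℕ)+1 : ℕ)):ℝ)+1) = 2*((j:ℕ):ℝ)+1+2 by push_cast; ring]
    · -- last row : one term, index t
      have hjm : (j:ℕ)+1 = m := by omega
      have hside : ∀ k, k ≠ ⟨t, hta⟩ → triQ m j k * triV m N i k = 0 := by
        intro k hk
        rw [Ne, Fin.ext_iff] at hk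
        simp only [Fin.val_mk] at hk
        rw [triQ_zero j k (by omega), zero_mul]
      rw [sum_one _ ⟨t, hta⟩ hside, triQ_two j ⟨t, hta⟩ (by simp; omega), hv]
      simp only [Fin.val_mk]
      have hjN : (2*((j:ℕ):ℝ)+1+2) = (N:ℝ) := by
        have h' : ((j:ℕ):ℝ) + 1 = (m:ℝ) := by exact_mod_cast congrArg (Nat.cast (R := ℝ)) hjm
        rw [hNR]; linarith
      rw [show (2*((t:ℕ):ℝ)+1) = 2*((j:ℕ):ℝ)+1-2 by rw [hjR]; ring, hjN, hcN]
      ring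

/-- For `n = 2r+1`, the `(r+p) × (r+p)` tridiagonal matrix `Q` with
`Q(1,1) = 2` and `2` on the sub/super-diagonals has eigenvalues
`λ_i = 4cos((2i−1)π/(n+2p))`, `i = 1, …, r+p`, with eigenvector having `j`-th entry
`cos((2i−1)(2j−1)π/(2(n+2p)))`; in particular the largest eigenvalue
`4cos(π/(n+2p))` has a strictly positive eigenvector. -/
theorem triQ_eigenpairs (r p n : ℕ) (hr : 1 ≤ r) (hn : n = 2 * r + 1) :
    (∀ i : ℕ, 1 ≤ i → i ≤ r + p →
      (triQ (r + p)).mulVec (triV (r + p) (n + 2 * p) i) =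
          (4 * Real.cos ((2 * (i : ℝ) - 1) * π / (n + 2 * p))) •
            triV (r + p) (n + 2 * p) i ∧
        triV (r + p) (n + 2 * p) i ≠ 0 ∧
        4 * Real.cos ((2 * (i : ℝ) - 1) * π / (n + 2 * p)) ≤
          4 * Real.cos (π / (n + 2 * p))) ∧
    (∀ j : Fin (r + p), 0 < triV (r + p) (n + 2 * p) 1 j) := by
  have hm : 1 ≤ r + p := by omega
  have hN : n + 2*p = 2*(r+p)+1 := by omega
  have hcast : ((n:ℝ) + 2 * (p:ℝ)) = ((n + 2*p : ℕ) : ℝ) := by push_cast; ring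
  have hNR : ((n + 2*p : ℕ) : ℝ) = 2*((r:ℝ)+(p:ℝ))+1 := by rw [hN]; push_cast; ring
  have hNpos : (0:ℝ) < ((n + 2*p : ℕ) : ℝ) := by rw [hNR]; positivity
  constructor
  · intro i hi1 hi2
    have hiR1 : (1:ℝ) ≤ 2*(i:ℝ)-1 := by
      have : (1:ℝ) ≤ (i:ℝ) := by exact_mod_cast hi1
      linarith
    have hiR2 : 2*(i:ℝ)-1 ≤ ((n + 2*p : ℕ) : ℝ) - 2 := by
      have : (i:ℝ) ≤ ((r:ℝ)+(p:ℝ)) := by exact_mod_cast hi2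
      rw [hNR]; linarith
    rw [hcast]
    refine ⟨key (r+p) (n+2*p) hm hN i hi1, ?_, ?_⟩
    · intro hzero
      have h0 := congrFun hzero ⟨0, by omega⟩
      have harg : (2*(i:ℝ)-1) * (2*(((⟨0, by omega⟩ : Fin (r+p)):ℕ):ℝ)+1) * π
          / (2*((n + 2*p : ℕ):ℝ)) = (2*(i:ℝ)-1) * π / (2*((n + 2*p : ℕ):ℝ)) := by
        simp
      have hpos : 0 < triV (r+p) (n+2*p) i ⟨0, by omega⟩ := by
        show 0 < Real.cos _
        rw [harg]
        apply Real.cos_pos_of_mem_Ioo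
        constructor
        · have : 0 < (2*(i:ℝ)-1) * π / (2*((n + 2*p : ℕ):ℝ)) := by
            apply div_pos (by nlinarith [Real.pi_pos]) (by linarith)
          nlinarith [Real.pi_pos]
        · rw [div_lt_iff₀ (by linarith)]
          nlinarith [Real.pi_pos, mul_le_mul_of_nonneg_right hiR2 (le_of_lt Real.pi_pos)]
      rw [h0] at hpos
      exact lt_irrefl 0 hpos
    · have hcos : Real.cos ((2*(i:ℝ)-1) * π / ((n + 2*p : ℕ):ℝ))
          ≤ Real.cos (π / ((n + 2*p : ℕ):ℝ)) := by
        apply Real.cos_le_cos_of_nonneg_of_le_pi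
        · positivity
        · rw [div_le_iff₀ hNpos]
          nlinarith [Real.pi_pos, mul_le_mul_of_nonneg_right hiR2 (le_of_lt Real.pi_pos)]
        · rw [div_le_div_iff₀ hNpos hNpos]
          nlinarith [mul_le_mul_of_nonneg_right hiR1
            (mul_nonneg (le_of_lt Real.pi_pos) (le_of_lt hNpos))]
      linarith
  · intro j
    have hjlt : ((j:ℕ):ℝ) + 1 ≤ (r:ℝ) + (p:ℝ) := by
      have := j.isLt
      push_cast
      exact_mod_cast this
    show 0 < Real.cos _
    have harg : (2*((1:ℕ):ℝ)-1) * (2*((j:ℕ):ℝ)+1) * π / (2*((n + 2*p : ℕ):ℝ))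
        = (2*((j:ℕ):ℝ)+1) * π / (2*((n + 2*p : ℕ):ℝ)) := by norm_num
    rw [harg]
    apply Real.cos_pos_of_mem_Ioo
    constructor
    · have : 0 < (2*((j:ℕ):ℝ)+1) * π / (2*((n + 2*p : ℕ):ℝ)) := by
        apply div_pos (by nlinarith [Real.pi_pos]) (by linarith)
      nlinarith [Real.pi_pos]
    · rw [div_lt_iff₀ (by linarith)]
      have h2 : 2*((j:ℕ):ℝ)+1 ≤ ((n + 2*p : ℕ):ℝ) - 2 := by rw [hNR]; linarith
      nlinarith [Real.pi_pos, mul_le_mul_of_nonneg_right h2 (le_of_lt Real.pi_pos)]
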